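/- Let H be a length heart in a triangulated category D with simple objects U and S ⊆ U. If the right simple tilt K = (S^⊥ ∩ H) * ⟨S⟩[-1] is a length heart, then every object of K[1] admits a right ⟨S⟩-approximation. -/

import Mathlib

open CategoryTheory Category Limits Pretriangulated

universe v u

namespace SMPaper

variable {C : Type u} [Category.{v} C] [Preadditive C] [HasZeroObject C] [HasShift C ℤ]
  [∀ n : ℤ, (shiftFunctor C n).Additive] [Pretriangulated C]

/-- The image of a set of objects under the `n`-th shift, closed under isomorphism. -/
def shiftSet (S : Set C) (n : ℤ) : Set C :=
  {d | ∃ s ∈ S, Nonempty ((shiftFunctor C n).obj s ≅ d)}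

/-- The extension product `A * B`: objects `d` fitting in a triangle `a → d → b → a[1]`. -/
def star (A B : Set C) : Set C :=
  {d | ∃ (a b : C) (f : a ⟶ d) (g : d ⟶ b) (h : b ⟶ (shiftFunctor C (1 : ℤ)).obj a),
    a ∈ A ∧ b ∈ B ∧ Triangle.mk f g h ∈ (distTriang C)}

/-- `Hom(A, B) = 0`. -/
def homOrth (A B : Set C) : Prop :=
  ∀ ⦃a : C⦄, a ∈ A → ∀ ⦃b : C⦄, b ∈ B → ∀ f : a ⟶ b, f = 0

/-- Right perpendicular `S^⊥`. -/
def rPerp (S : Set C) : Set C := {d | ∀ s ∈ S, ∀ f : s ⟶ d, f = 0}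

/-- Left perpendicular `^⊥S`. -/
def lPerp (S : Set C) : Set C := {d | ∀ s ∈ S, ∀ f : d ⟶ s, f = 0}

def isoClosure (S : Set C) : Set C := {d | ∃ s ∈ S, Nonempty (s ≅ d)}

/-- The extension closure of a set of objects. -/
inductive ExtClosureP (S : Set C) : C → Prop
  | of (s : C) : s ∈ S → ExtClosureP S s
  | zero (z : C) : IsZero z → ExtClosureP S z
  | iso (x y : C) : (x ≅ y) → ExtClosureP S x → ExtClosureP S y
  | ext (a d b : C) (f : a ⟶ d) (g : d ⟶ b) (h : b ⟶ (shiftFunctor C (1 : ℤ)).obj a) :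
      Triangle.mk f g h ∈ (distTriang C) → ExtClosureP S a → ExtClosureP S b → ExtClosureP S d

def extClosure (S : Set C) : Set C := {d | ExtClosureP S d}

/-- `⟨S⟩[i] * ⟨S⟩[i-1] * ⋯ * ⟨S⟩[i-n]`. -/
def prodDown (S : Set C) : ℤ → ℕ → Set C
  | i, 0 => shiftSet (extClosure S) i
  | i, n + 1 => star (shiftSet (extClosure S) i) (prodDown S (i - 1) n)

/-- `susp S = ⋃_{n ≥ 0} ⟨S⟩[n] * ⋯ * ⟨S⟩[0]`. -/
def suspSet (S : Set C) : Set C := {d | ∃ n : ℕ, d ∈ prodDown S n n}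

/-- `cosusp S = ⋃_{n ≥ 0} ⟨S⟩[0] * ⋯ * ⟨S⟩[-n]`. -/
def cosuspSet (S : Set C) : Set C := {d | ∃ n : ℕ, d ∈ prodDown S 0 n}

/-- `cosusp (S[-1]) = ⋃_{n ≥ 0} ⟨S⟩[-1] * ⋯ * ⟨S⟩[-1-n]`. -/
def cosuspNeg (S : Set C) : Set C := {d | ∃ n : ℕ, d ∈ prodDown S (-1) n}

/-- A t-structure `(X, Y)`: full (iso-closed, containing zero) subcategories with
`Hom(X, Y) = 0`, `D = X * Y` and `X[1] ⊆ X`. -/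
structure IsTStructure (X Y : Set C) : Prop where
  isoX : ∀ ⦃x y : C⦄, (x ≅ y) → x ∈ X → y ∈ X
  isoY : ∀ ⦃x y : C⦄, (x ≅ y) → x ∈ Y → y ∈ Y
  zeroX : ∀ z : C, IsZero z → z ∈ X
  zeroY : ∀ z : C, IsZero z → z ∈ Y
  hom : homOrth X Y
  gen : ∀ d : C, d ∈ star X Y
  shift : shiftSet X 1 ⊆ X

/-- A co-t-structure `(W, X)`. -/
structure IsCoTStructure (W X : Set C) : Prop where
  isoW : ∀ ⦃x y : C⦄, (x ≅ y) → x ∈ W → y ∈ W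
  isoX : ∀ ⦃x y : C⦄, (x ≅ y) → x ∈ X → y ∈ X
  zeroW : ∀ z : C, IsZero z → z ∈ W
  zeroX : ∀ z : C, IsZero z → z ∈ X
  hom : homOrth W X
  gen : ∀ d : C, d ∈ star W X
  shift : shiftSet W (-1) ⊆ W

/-- The heart `X ∩ Y[1]` of a t-structure. -/
def heart (X Y : Set C) : Set C := X ∩ shiftSet Y 1

/-- Boundedness of a torsion pair/t-structure. -/
def IsBoundedTS (X Y : Set C) : Prop :=
  ∀ d : C, (∃ n : ℤ, d ∈ shiftSet X n) ∧ (∃ n : ℤ, d ∈ shiftSet Y n)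

/-- A torsion pair `(T, F)` in the heart `H`: `Hom(T, F) = 0` and every object of `H`
is an extension of an object of `F` by an object of `T`. -/
structure IsTorsionPairIn (H T F : Set C) : Prop where
  isoT : ∀ ⦃x y : C⦄, (x ≅ y) → x ∈ T → y ∈ T
  isoF : ∀ ⦃x y : C⦄, (x ≅ y) → x ∈ F → y ∈ F
  subT : T ⊆ H
  subF : F ⊆ H
  hom : homOrth T F
  gen : H ⊆ star T F

/-- `f : x → d` is a right `S`-approximation. -/
def IsRightApprox (S : Set C) {x d : C} (f : x ⟶ d) : Prop :=
  x ∈ S ∧ ∀ ⦃x' : C⦄, x' ∈ S → ∀ g : x' ⟶ d, ∃ h : x' ⟶ x, h ≫ f = g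

/-- `f : d → x` is a left `S`-approximation. -/
def IsLeftApprox (S : Set C) {d x : C} (f : d ⟶ x) : Prop :=
  x ∈ S ∧ ∀ ⦃x' : C⦄, x' ∈ S → ∀ g : d ⟶ x', ∃ h : x ⟶ x', f ≫ h = g

def RightMinimal {x d : C} (f : x ⟶ d) : Prop :=
  ∀ β : x ⟶ x, β ≫ f = f → IsIso β

def LeftMinimal {d x : C} (f : d ⟶ x) : Prop :=
  ∀ β : x ⟶ x, f ≫ β = f → IsIso β

def HasRightApprox (S : Set C) (d : C) : Prop := ∃ (x : C) (f : x ⟶ d), IsRightApprox S f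

def HasLeftApprox (S : Set C) (d : C) : Prop := ∃ (x : C) (f : d ⟶ x), IsLeftApprox S f

def ContravariantlyFiniteIn (S A : Set C) : Prop := ∀ d ∈ A, HasRightApprox S d

def CovariantlyFiniteIn (S A : Set C) : Prop := ∀ d ∈ A, HasLeftApprox S d

/-- An orthogonal collection (semibrick). -/
structure IsOrthogonal (U : Set C) : Prop where
  nonzero : ∀ u ∈ U, ¬ IsZero u
  hom : ∀ ⦃u v : C⦄, u ∈ U → v ∈ U → ¬ Nonempty (u ≅ v) → ∀ f : u ⟶ v, f = 0
  div : ∀ u ∈ U, ∀ f : u ⟶ u, f = 0 ∨ IsIso f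

/-- An `∞`-orthogonal collection. -/
def IsInfOrthogonal (U : Set C) : Prop :=
  IsOrthogonal U ∧ ∀ ⦃u v : C⦄, u ∈ U → v ∈ U → ∀ m : ℤ, 0 < m →
    ∀ f : (shiftFunctor C m).obj u ⟶ v, f = 0

/-- A simple-minded collection. -/
def IsSMC (U : Set C) : Prop :=
  IsInfOrthogonal U ∧ ∀ d : C, ∃ i j : ℤ, j ≤ i ∧ d ∈ prodDown U i (i - j).toNat

/-- `m` is a right mutation `∂_S(d)` of `d` with respect to `S`. -/
def IsRightMutation (S : Set C) (d m : C) : Prop :=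
  (d ∈ S ∧ Nonempty (d ≅ m)) ∨
  (d ∉ S ∧ ∃ (s : C) (f : s ⟶ (shiftFunctor C (1 : ℤ)).obj d)
      (g : (shiftFunctor C (1 : ℤ)).obj d ⟶ m) (h : m ⟶ (shiftFunctor C (1 : ℤ)).obj s),
    IsRightApprox (extClosure S) f ∧ RightMinimal f ∧ Triangle.mk f g h ∈ (distTriang C))

/-- `m` is a left mutation `∂⁻_S(d)` of `d` with respect to `S`. -/
def IsLeftMutation (S : Set C) (d m : C) : Prop :=
  (d ∈ S ∧ Nonempty (d ≅ m)) ∨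
  (d ∉ S ∧ ∃ (s : C) (g : m ⟶ (shiftFunctor C (-1 : ℤ)).obj d)
      (f : (shiftFunctor C (-1 : ℤ)).obj d ⟶ s) (h : s ⟶ (shiftFunctor C (1 : ℤ)).obj m),
    IsLeftApprox (extClosure S) f ∧ LeftMinimal f ∧ Triangle.mk g f h ∈ (distTriang C))

def rightMutationSet (S U : Set C) : Set C := {m | ∃ u ∈ U, IsRightMutation S u m}

def leftMutationSet (S U : Set C) : Set C := {m | ∃ u ∈ U, IsLeftMutation S u m}

/-- `h` is a simple object of the heart `H`. -/
def IsSimpleIn (H : Set C) (h : C) : Prop :=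
  h ∈ H ∧ ¬ IsZero h ∧
    ∀ (a b : C) (f : a ⟶ h) (g : h ⟶ b) (w : b ⟶ (shiftFunctor C (1 : ℤ)).obj a),
      a ∈ H → b ∈ H → Triangle.mk f g w ∈ (distTriang C) → IsZero a ∨ IsZero b

def simplesOf (H : Set C) : Set C := {h | IsSimpleIn H h}

/-- A heart is a length category iff every object has a finite composition series, i.e.
lies in the extension closure of the simple objects. -/
def HeartIsLength (H : Set C) : Prop := H ⊆ extClosure (simplesOf H)

/-- A bounded t-structure with length heart. -/
def IsLengthHeart (X Y : Set C) : Prop :=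
  IsTStructure X Y ∧ IsBoundedTS X Y ∧ HeartIsLength (heart X Y)

/-- An `S`-mutation pair `(A, B)`. -/
def IsSMutationPair (S A B : Set C) : Prop :=
  isoClosure A =
    lPerp S ∩ rPerp S ∩ lPerp (shiftSet S (-1)) ∩ shiftSet (star (extClosure S) B) (-1) ∧
  isoClosure B =
    lPerp S ∩ rPerp S ∩ rPerp (shiftSet S 1) ∩ shiftSet (star A (extClosure S)) 1

/-- The conditions of the SMC Setup. -/
def SMCSetup (S : Set C) : Prop :=
  CovariantlyFiniteIn (extClosure S)
    {d | ∀ s ∈ S, ∀ m : ℤ, m < 0 → ∀ f : d ⟶ (shiftFunctor C m).obj s, f = 0} ∧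
  ContravariantlyFiniteIn (extClosure S)
    {d | ∀ s ∈ S, ∀ m : ℤ, 0 < m → ∀ f : (shiftFunctor C m).obj s ⟶ d, f = 0} ∧
  (∀ d : C, ∃ N : ℤ, ∀ m : ℤ, m ≤ N → ∀ s ∈ S, ∀ f : d ⟶ (shiftFunctor C m).obj s, f = 0) ∧
  (∀ d : C, ∃ N : ℤ, ∀ m : ℤ, N ≤ m → ∀ s ∈ S, ∀ f : (shiftFunctor C m).obj s ⟶ d, f = 0)

/-- `f : p → h` is an epimorphism in the heart `H`, i.e. fits in a triangle
`a → p → h → a[1]` with `a ∈ H`. -/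
def IsEpiIn (H : Set C) {p h : C} (f : p ⟶ h) : Prop :=
  ∃ (a : C) (i : a ⟶ p) (w : h ⟶ (shiftFunctor C (1 : ℤ)).obj a),
    a ∈ H ∧ Triangle.mk i f w ∈ (distTriang C)

/-- `f : h → i` is a monomorphism in the heart `H`. -/
def IsMonoIn (H : Set C) {h i : C} (f : h ⟶ i) : Prop :=
  ∃ (b : C) (q : i ⟶ b) (w : b ⟶ (shiftFunctor C (1 : ℤ)).obj h),
    b ∈ H ∧ Triangle.mk f q w ∈ (distTriang C)

def IsProjectiveIn (H : Set C) (p : C) : Prop :=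
  p ∈ H ∧ ∀ ⦃x y : C⦄ (f : x ⟶ y), x ∈ H → y ∈ H → IsEpiIn H f →
    ∀ g : p ⟶ y, ∃ l : p ⟶ x, l ≫ f = g

def IsInjectiveIn (H : Set C) (i : C) : Prop :=
  i ∈ H ∧ ∀ ⦃x y : C⦄ (f : x ⟶ y), x ∈ H → y ∈ H → IsMonoIn H f →
    ∀ g : x ⟶ i, ∃ l : y ⟶ i, f ≫ l = g

def EnoughProjectivesIn (H : Set C) : Prop :=
  ∀ h ∈ H, ∃ (p : C) (f : p ⟶ h), IsProjectiveIn H p ∧ IsEpiIn H f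

def EnoughInjectivesIn (H : Set C) : Prop :=
  ∀ h ∈ H, ∃ (i : C) (f : h ⟶ i), IsInjectiveIn H i ∧ IsMonoIn H f

/-!
Since `K` is a length heart, every object of `K⟦1⟧` is an iterated extension of shifted simples
`p⟦1⟧` of `K`, and such a `p⟦1⟧` is isomorphic either to some `s ∈ S` or to `f⟦1⟧` with
`f ∈ S^⊥ ∩ H` and `Hom(S, f⟦1⟧) = 0`. Along these extensions one propagates, through triangles
`B → E → D → B⟦1⟧`, a right `⟨S⟩`-approximation `ε` of `B` whose cone lies in `⟨S⟩^⊥`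
(`ε⟦1⟧` is injective on `Hom(⟨S⟩, -)`); this stronger invariant is what survives extensions.
At a block `s ∈ S` one asks whether the attaching map `s → B⟦1⟧` lifts along `ε⟦1⟧`: if it
does, the cocone of the lift approximates `E`; if not, Schur's lemma in `H` shows that `ε`
followed by `B → E` still does. Starting from `B = 0` gives the approximation.
-/

section ZeroMorphisms

variable {A : Type*} [Category A] [HasZeroMorphisms A]

def HomVanishes (a b : A) : Prop := ∀ f : a ⟶ b, f = 0

lemma HomVanishes.of_iso_left {a a' b : A} (e : a ≅ a') (h : HomVanishes a b) :
    HomVanishes a' b := fun f => by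
  simpa using e.inv ≫= h (e.hom ≫ f)

lemma HomVanishes.of_iso_right {a b b' : A} (e : b ≅ b') (h : HomVanishes a b) :
    HomVanishes a b' := fun f => by
  simpa using h (f ≫ e.inv) =≫ e.hom

lemma homVanishes_iff_of_adjunction {B : Type*} [Category B] [HasZeroMorphisms B] {F : A ⥤ B}
    {G : B ⥤ A} (adj : F ⊣ G) [F.PreservesZeroMorphisms] [G.PreservesZeroMorphisms]
    {a : A} {b : B} : HomVanishes (F.obj a) b ↔ HomVanishes a (G.obj b) := by
  constructor
  · intro h g
    simpa [Adjunction.homEquiv_unit] using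
      congrArg (adj.homEquiv a b) (h ((adj.homEquiv a b).symm g))
  · intro h f
    simpa [Adjunction.homEquiv_counit] using
      congrArg (adj.homEquiv a b).symm (h (adj.homEquiv a b f))

def HomSurjective (T : Set A) {a b : A} (f : a ⟶ b) : Prop :=
  ∀ ⦃z : A⦄, z ∈ T → ∀ ψ : z ⟶ b, ∃ ζ : z ⟶ a, ζ ≫ f = ψ

def HomInjective (T : Set A) {a b : A} (f : a ⟶ b) : Prop :=
  ∀ ⦃z : A⦄, z ∈ T → ∀ ψ : z ⟶ a, ψ ≫ f = 0 → ψ = 0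

lemma HomInjective.comp {T : Set A} {a b c : A} {f : a ⟶ b} {g : b ⟶ c}
    (hf : HomInjective T f) (hg : HomInjective T g) : HomInjective T (f ≫ g) :=
  fun _ hz ψ hψ => hf hz ψ (hg hz _ (by rwa [assoc]))

lemma HomInjective.of_comp {T : Set A} {a b c : A} {f : a ⟶ b} {g : b ⟶ c}
    (h : HomInjective T (f ≫ g)) : HomInjective T f :=
  fun _ hz ψ hψ => h hz ψ (by rw [← assoc, hψ, zero_comp])

end ZeroMorphisms

section Orthogonals

variable {A : Type*} [Category A] [Preadditive A]

lemma mem_rPerp_of_iso {T : Set A} {d d' : A} (e : d ≅ d') (hd : d ∈ rPerp T) :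
    d' ∈ rPerp T :=
  fun s hs => HomVanishes.of_iso_right e (hd s hs)

lemma rPerp_anti {T T' : Set A} (h : T ⊆ T') : rPerp T' ⊆ rPerp T :=
  fun _ hd s hs => hd s (h hs)

variable [HasShift A ℤ]

lemma homVanishes_shift_iff (n : ℤ) {a b : A} :
    HomVanishes (a⟦n⟧) b ↔ HomVanishes a (b⟦-n⟧) :=
  homVanishes_iff_of_adjunction (shiftEquiv A n).toAdjunction

lemma mem_rPerp_shiftSet_iff (n : ℤ) {T : Set A} {d : A} :
    d ∈ rPerp (shiftSet T n) ↔ d⟦-n⟧ ∈ rPerp T := by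
  constructor
  · exact fun hd a ha => (homVanishes_shift_iff n).1 (hd _ ⟨a, ha, ⟨Iso.refl _⟩⟩)
  · rintro hd _ ⟨a, ha, ⟨e⟩⟩
    exact ((homVanishes_shift_iff n).2 (hd a ha)).of_iso_left e

lemma isZero_of_isZero_shift (n : ℤ) {a : A} (h : IsZero (a⟦n⟧)) : IsZero a :=
  ((shiftFunctor A (-n)).map_isZero h).of_iso ((shiftEquiv A n).unitIso.app a)

end Orthogonals

section Triangles

variable {a d b W : C} {f : a ⟶ d} {g : d ⟶ b} {w : b ⟶ a⟦(1 : ℤ)⟧}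

lemma yoneda_exact₂_mk (h : Triangle.mk f g w ∈ distTriang C) (φ : d ⟶ W) (hφ : f ≫ φ = 0) :
    ∃ ψ : b ⟶ W, φ = g ≫ ψ :=
  Triangle.yoneda_exact₂ _ h φ hφ

lemma yoneda_exact₃_mk (h : Triangle.mk f g w ∈ distTriang C) (φ : b ⟶ W) (hφ : g ≫ φ = 0) :
    ∃ ψ : a⟦(1 : ℤ)⟧ ⟶ W, φ = w ≫ ψ :=
  Triangle.yoneda_exact₃ _ h φ hφ

lemma yoneda_exact₁_mk (h : Triangle.mk f g w ∈ distTriang C) (φ : a ⟶ W)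
    (hφ : w ≫ φ⟦(1 : ℤ)⟧' = 0) : ∃ ψ : d ⟶ W, φ = f ≫ ψ := by
  refine Triangle.yoneda_exact₂ _ (inv_rot_of_distTriang _ h) φ ?_
  show (-(w⟦(-1 : ℤ)⟧' ≫ (shiftFunctorCompIsoId C (1 : ℤ) (-1) (by omega)).hom.app a)) ≫ φ = 0
  have hnat := (shiftFunctorCompIsoId C (1 : ℤ) (-1) (by omega)).hom.naturality φ
  dsimp at hnat
  rw [Preadditive.neg_comp, neg_eq_zero, assoc, ← hnat, ← assoc, ← Functor.map_comp, hφ,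
    Functor.map_zero, zero_comp]

lemma coyoneda_exact₁_mk (h : Triangle.mk f g w ∈ distTriang C) (φ : W ⟶ a⟦(1 : ℤ)⟧)
    (hφ : φ ≫ f⟦(1 : ℤ)⟧' = 0) : ∃ ψ : W ⟶ b, φ = ψ ≫ w :=
  Triangle.coyoneda_exact₁ _ h φ hφ

lemma coyoneda_exact₂_mk (h : Triangle.mk f g w ∈ distTriang C) (φ : W ⟶ d) (hφ : φ ≫ g = 0) :
    ∃ ψ : W ⟶ a, φ = ψ ≫ f :=
  Triangle.coyoneda_exact₂ _ h φ hφ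

lemma coyoneda_exact₃_mk (h : Triangle.mk f g w ∈ distTriang C) (φ : W ⟶ b) (hφ : φ ≫ w = 0) :
    ∃ ψ : W ⟶ d, φ = ψ ≫ g :=
  Triangle.coyoneda_exact₃ _ h φ hφ

lemma complete_distinguished_triangle_morphism₂_mk {a' d' b' : C} {f' : a' ⟶ d'} {g' : d' ⟶ b'}
    {w' : b' ⟶ a'⟦(1 : ℤ)⟧} (h : Triangle.mk f g w ∈ distTriang C)
    (h' : Triangle.mk f' g' w' ∈ distTriang C) (α : a ⟶ a') (γ : b ⟶ b')
    (comm : w ≫ α⟦(1 : ℤ)⟧' = γ ≫ w') :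
    ∃ β : d ⟶ d', f ≫ β = α ≫ f' ∧ g ≫ γ = β ≫ g' :=
  complete_distinguished_triangle_morphism₂ _ _ h h' α γ comm

lemma distTriang_mk_comp₁₂ (h : Triangle.mk f g w ∈ distTriang C) : f ≫ g = 0 :=
  comp_distTriang_mor_zero₁₂ _ h

lemma distTriang_mk_comp₂₃ (h : Triangle.mk f g w ∈ distTriang C) : g ≫ w = 0 :=
  comp_distTriang_mor_zero₂₃ _ h

lemma distTriang_mk_comp₃₁ (h : Triangle.mk f g w ∈ distTriang C) : w ≫ f⟦(1 : ℤ)⟧' = 0 :=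
  comp_distTriang_mor_zero₃₁ _ h

lemma distTriang_mk_iso₂ (h : Triangle.mk f g w ∈ distTriang C) {d' : C} (e : d ≅ d') :
    Triangle.mk (f ≫ e.hom) (e.inv ≫ g) w ∈ distTriang C :=
  isomorphic_distinguished _ h _ (Triangle.isoMk _ _ (Iso.refl _) e.symm (Iso.refl _)
    (by simp [Triangle.mk]) (by simp [Triangle.mk]) (by simp [Triangle.mk]))

lemma distTriang_mk_iso₃ (h : Triangle.mk f g w ∈ distTriang C) {b' : C} (e : b ≅ b') :
    Triangle.mk f (g ≫ e.hom) (e.inv ≫ w) ∈ distTriang C :=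
  isomorphic_distinguished _ h _ (Triangle.isoMk _ _ (Iso.refl _) (Iso.refl _) e.symm
    (by simp [Triangle.mk]) (by simp [Triangle.mk]) (by simp [Triangle.mk]))

/-- The shifted triangle with the signs of `Triangle.shiftFunctor` moved into the third map. -/
lemma shift_distTriang_mk (h : Triangle.mk f g w ∈ distTriang C) (n : ℤ) :
    ∃ w' : b⟦n⟧ ⟶ a⟦n⟧⟦(1 : ℤ)⟧, Triangle.mk (f⟦n⟧') (g⟦n⟧') w' ∈ distTriang C := by
  refine ⟨n.negOnePow • (w⟦n⟧' ≫ (shiftFunctorComm C 1 n).hom.app a),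
    isomorphic_distinguished _ (Triangle.shift_distinguished _ h n) _
      (Triangle.isoMk _ _ (Iso.refl (a⟦n⟧)) (n.negOnePow • Iso.refl (d⟦n⟧)) (Iso.refl (b⟦n⟧))
        ?_ ?_ ?_)⟩
  · dsimp; simp [Triangle.mk, Triangle.shiftFunctor]
  · dsimp; simp [Triangle.mk, Triangle.shiftFunctor, smul_smul]
  · dsimp; simp [Triangle.mk, Triangle.shiftFunctor]

lemma homVanishes_to_obj₂ {τ : Triangle C} (hτ : τ ∈ distTriang C)
    (h₁ : HomVanishes W τ.obj₁) (h₃ : HomVanishes W τ.obj₃) : HomVanishes W τ.obj₂ := fun ψ => by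
  obtain ⟨ξ, rfl⟩ := Triangle.coyoneda_exact₂ τ hτ ψ (h₃ _)
  rw [h₁ ξ]
  exact zero_comp

lemma homVanishes_from_obj₂ {τ : Triangle C} (hτ : τ ∈ distTriang C)
    (h₁ : HomVanishes τ.obj₁ W) (h₃ : HomVanishes τ.obj₃ W) : HomVanishes τ.obj₂ W := fun ψ => by
  obtain ⟨ξ, rfl⟩ := Triangle.yoneda_exact₂ τ hτ ψ (h₁ _)
  rw [h₃ ξ]
  exact comp_zero

lemma mem_rPerp_obj₂ {T : Set C} {τ : Triangle C} (hτ : τ ∈ distTriang C)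
    (h₁ : τ.obj₁ ∈ rPerp T) (h₃ : τ.obj₃ ∈ rPerp T) : τ.obj₂ ∈ rPerp T :=
  fun s hs => homVanishes_to_obj₂ hτ (h₁ s hs) (h₃ s hs)

lemma mem_lPerp_obj₂ {T : Set C} {τ : Triangle C} (hτ : τ ∈ distTriang C)
    (h₁ : τ.obj₁ ∈ lPerp T) (h₃ : τ.obj₃ ∈ lPerp T) : τ.obj₂ ∈ lPerp T :=
  fun s hs => homVanishes_from_obj₂ hτ (h₁ s hs) (h₃ s hs)

lemma homInjective_of_distTriang {T : Set C} (h : Triangle.mk f g w ∈ distTriang C)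
    (hb : b⟦(-1 : ℤ)⟧ ∈ rPerp T) : HomInjective T f := fun _ hz ψ hψ => by
  obtain ⟨ξ, rfl⟩ := Triangle.coyoneda_exact₂ _ (inv_rot_of_distTriang _ h) ψ hψ
  rw [hb _ hz ξ]
  exact zero_comp

lemma mem_rPerp_shiftSet_of_homInjective {T : Set C} (h : Triangle.mk f g w ∈ distTriang C)
    (hd : d ∈ rPerp (shiftSet T 1)) (hf : HomInjective T f) : b ∈ rPerp (shiftSet T 1) := by
  rw [mem_rPerp_shiftSet_iff] at hd ⊢
  have hτ := inv_rot_of_distTriang _ h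
  intro z hz ψ
  have hψ : ψ ≫ (Triangle.mk f g w).invRotate.mor₁ = 0 :=
    hf hz _ ((assoc _ _ _).trans ((ψ ≫= comp_distTriang_mor_zero₁₂ _ hτ).trans comp_zero))
  obtain ⟨ξ, rfl⟩ := Triangle.coyoneda_exact₂ _ (inv_rot_of_distTriang _ hτ) ψ hψ
  rw [hd _ hz ξ]
  exact zero_comp

end Triangles

section ExtClosure

open ZeroObject

lemma subset_extClosure (U : Set C) : U ⊆ extClosure U := fun u hu => ExtClosureP.of u hu

lemma zero_mem_extClosure (U : Set C) : (0 : C) ∈ extClosure U :=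
  ExtClosureP.zero _ (isZero_zero C)

lemma mem_rPerp_of_mem_extClosure {U T : Set C} (hU : U ⊆ rPerp T) {d : C}
    (hd : d ∈ extClosure U) : d ∈ rPerp T := by
  induction hd with
  | of u hu => exact hU hu
  | zero z hz => exact fun _ _ f => hz.eq_of_tgt f 0
  | iso x y e _ ih => exact mem_rPerp_of_iso e ih
  | ext a d b f g w htri _ _ iha ihb => exact mem_rPerp_obj₂ htri iha ihb

lemma rPerp_extClosure (U : Set C) : rPerp (extClosure U) = rPerp U := by
  refine (rPerp_anti (subset_extClosure U)).antisymm fun q hq z hz => ?_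
  induction hz with
  | of u hu => exact hq u hu
  | zero z hz => exact fun f => hz.eq_of_src f 0
  | iso x y e _ ih => exact HomVanishes.of_iso_left e ih
  | ext a d b f g w htri _ _ iha ihb => exact homVanishes_from_obj₂ htri iha ihb

lemma shift_mem_extClosure (n : ℤ) {U V : Set C} (hUV : ∀ u ∈ U, u⟦n⟧ ∈ extClosure V) {e : C}
    (he : e ∈ extClosure U) : e⟦n⟧ ∈ extClosure V := by
  induction he with
  | of u hu => exact hUV u hu
  | zero z hz => exact ExtClosureP.zero _ ((shiftFunctor C n).map_isZero hz)
  | iso x y e _ ih => exact ExtClosureP.iso _ _ ((shiftFunctor C n).mapIso e) ih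
  | ext a d b f g w htri _ _ iha ihb =>
    obtain ⟨w', hw'⟩ := shift_distTriang_mk htri n
    exact ExtClosureP.ext _ _ _ _ _ _ hw' iha ihb

lemma subset_star_left {A B : Set C} (hB : (0 : C) ∈ B) : A ⊆ star A B :=
  fun a ha => ⟨a, 0, 𝟙 a, 0, 0, ha, hB, contractible_distinguished a⟩

lemma subset_star_right {A B : Set C} (hA : (0 : C) ∈ A) : B ⊆ star A B :=
  fun b hb => ⟨0, b, 0, 𝟙 b, 0, hA, hb, contractible_distinguished₁ b⟩

end ExtClosure

namespace IsTStructure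

open ZeroObject

variable {X Y : Set C}

lemma shift_mem_X (hT : IsTStructure X Y) {x : C} (hx : x ∈ X) : x⟦(1 : ℤ)⟧ ∈ X :=
  hT.shift ⟨x, hx, ⟨Iso.refl _⟩⟩

lemma mem_rPerp_of_mem_Y (hT : IsTStructure X Y) {y : C} (hy : y ∈ Y) : y ∈ rPerp X :=
  fun _ hx f => hT.hom hx hy f

lemma mem_rPerp_shiftSet_of_mem_Y (hT : IsTStructure X Y) {y : C} (hy : y ∈ Y) :
    y ∈ rPerp (shiftSet X 1) :=
  rPerp_anti hT.shift (hT.mem_rPerp_of_mem_Y hy)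

lemma isZero_of_mem_X_of_mem_Y (hT : IsTStructure X Y) {d : C} (hX : d ∈ X) (hY : d ∈ Y) :
    IsZero d :=
  (IsZero.iff_id_eq_zero d).2 (hT.hom hX hY _)

lemma mem_X_of_mem_lPerp (hT : IsTStructure X Y) {d : C} (hd : d ∈ lPerp Y) : d ∈ X := by
  obtain ⟨x, y, f, g, h, hx, hy, hτ⟩ := hT.gen d
  obtain ⟨σ, hσ⟩ := Triangle.yoneda_exact₂ _ (rot_of_distTriang _ hτ) (𝟙 y)
    ((comp_id g).trans (hd y hy g))
  have hy0 : IsZero y := by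
    rw [IsZero.iff_id_eq_zero, hσ, hT.hom (hT.shift_mem_X hx) hy σ]
    exact comp_zero
  have : IsIso f := (Triangle.isZero₃_iff_isIso₁ _ hτ).1 hy0
  exact hT.isoX (asIso f) hx

lemma mem_Y_of_mem_rPerp (hT : IsTStructure X Y) {d : C} (hd : d ∈ rPerp X) : d ∈ Y := by
  obtain ⟨x, y, f, g, h, hx, hy, hτ⟩ := hT.gen d
  obtain ⟨σ, hσ⟩ := Triangle.coyoneda_exact₃ _ (rot_of_distTriang _ hτ) (𝟙 (x⟦(1 : ℤ)⟧))
    (show 𝟙 _ ≫ (-f⟦(1 : ℤ)⟧') = 0 by simp [hd x hx f])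
  have hx0 : IsZero (x⟦(1 : ℤ)⟧) := by
    rw [IsZero.iff_id_eq_zero, hσ, hT.hom (hT.shift_mem_X hx) hy σ]
    exact zero_comp
  have : IsIso g :=
    (Triangle.isZero₁_iff_isIso₂ _ hτ).1 (isZero_of_isZero_shift 1 hx0)
  exact hT.isoY (asIso g).symm hy

lemma shift_neg_mem_Y (hT : IsTStructure X Y) {y : C} (hy : y ∈ Y) : y⟦(-1 : ℤ)⟧ ∈ Y :=
  hT.mem_Y_of_mem_rPerp ((mem_rPerp_shiftSet_iff 1).1 (hT.mem_rPerp_shiftSet_of_mem_Y hy))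

lemma mem_X_of_distTriang (hT : IsTStructure X Y) {τ : Triangle C} (hτ : τ ∈ distTriang C)
    (h₁ : τ.obj₁ ∈ X) (h₃ : τ.obj₃ ∈ X) : τ.obj₂ ∈ X :=
  hT.mem_X_of_mem_lPerp (mem_lPerp_obj₂ hτ (fun _ hy f => hT.hom h₁ hy f)
    (fun _ hy f => hT.hom h₃ hy f))

lemma zero_mem_heart (hT : IsTStructure X Y) : (0 : C) ∈ heart X Y :=
  ⟨hT.zeroX _ (isZero_zero C), 0, hT.zeroY _ (isZero_zero C),
    ⟨((shiftFunctor C 1).map_isZero (isZero_zero C)).iso (isZero_zero C)⟩⟩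

lemma shift_neg_mem_Y_of_mem_heart (hT : IsTStructure X Y) {h : C} (hh : h ∈ heart X Y) :
    h⟦(-1 : ℤ)⟧ ∈ Y := by
  obtain ⟨-, y, hy, ⟨e⟩⟩ := hh
  exact hT.isoY ((shiftEquiv C 1).unitIso.app y ≪≫ (shiftFunctor C (-1)).mapIso e) hy

lemma mem_rPerp_of_mem_heart (hT : IsTStructure X Y) {h : C} (hh : h ∈ heart X Y) :
    h ∈ rPerp (shiftSet X 1) :=
  (mem_rPerp_shiftSet_iff 1).2 (hT.mem_rPerp_of_mem_Y (hT.shift_neg_mem_Y_of_mem_heart hh))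

lemma mem_heart_of_mem_rPerp (hT : IsTStructure X Y) {d : C} (hX : d ∈ X)
    (hd : d ∈ rPerp (shiftSet X 1)) : d ∈ heart X Y :=
  ⟨hX, d⟦(-1 : ℤ)⟧, hT.mem_Y_of_mem_rPerp ((mem_rPerp_shiftSet_iff 1).1 hd),
    ⟨(shiftEquiv C 1).counitIso.app d⟩⟩

lemma mem_heart_of_distTriang (hT : IsTStructure X Y) {τ : Triangle C} (hτ : τ ∈ distTriang C)
    (h₁ : τ.obj₁ ∈ heart X Y) (h₃ : τ.obj₃ ∈ heart X Y) : τ.obj₂ ∈ heart X Y :=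
  hT.mem_heart_of_mem_rPerp (hT.mem_X_of_distTriang hτ h₁.1 h₃.1)
    (mem_rPerp_obj₂ hτ (hT.mem_rPerp_of_mem_heart h₁) (hT.mem_rPerp_of_mem_heart h₃))

/-- Schur's lemma for the heart: the `X`-truncation `k` of the cocone `q` of `f` is the kernel
of `f`, and the cone of `k → s` is its image. -/
lemma isIso_of_isSimpleIn_heart (hT : IsTStructure X Y) {s s' : C}
    (hs : IsSimpleIn (heart X Y) s) (hs' : IsSimpleIn (heart X Y) s') {f : s ⟶ s'} (hf : f ≠ 0) :
    IsIso f := by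
  obtain ⟨q, j, δ, hq⟩ := distinguished_cocone_triangle₁ f
  have hs'Y := hT.shift_neg_mem_Y_of_mem_heart hs'.1
  have hqperp : q ∈ rPerp (shiftSet X 1) := mem_rPerp_obj₂ (inv_rot_of_distTriang _ hq)
    (hT.mem_rPerp_shiftSet_of_mem_Y hs'Y) (hT.mem_rPerp_of_mem_heart hs.1)
  obtain ⟨k, y, i, g, h, hkX, hy, hk⟩ := hT.gen q
  have hkH : k ∈ heart X Y := hT.mem_heart_of_mem_rPerp hkX (mem_rPerp_obj₂
    (inv_rot_of_distTriang _ hk) (hT.mem_rPerp_shiftSet_of_mem_Y (hT.shift_neg_mem_Y hy)) hqperp)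
  have hinj : HomInjective X (i ≫ j) :=
    (homInjective_of_distTriang hk (hT.mem_rPerp_of_mem_Y (hT.shift_neg_mem_Y hy))).comp
      (homInjective_of_distTriang hq (hT.mem_rPerp_of_mem_Y hs'Y))
  obtain ⟨m, μ, θ, hm⟩ := distinguished_cocone_triangle (i ≫ j)
  have hmH : m ∈ heart X Y := hT.mem_heart_of_mem_rPerp
    (hT.mem_X_of_distTriang (rot_of_distTriang _ hm) hs.1.1 (hT.shift_mem_X hkX))
    (mem_rPerp_shiftSet_of_homInjective hm (hT.mem_rPerp_of_mem_heart hs.1) hinj)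
  rcases hs.2.2 _ _ _ _ _ hkH hmH hm with hk0 | hm0
  · have : IsIso g := (Triangle.isZero₁_iff_isIso₂ _ hk).1 hk0
    have hqH : q⟦(1 : ℤ)⟧ ∈ heart X Y :=
      ⟨hT.mem_X_of_distTriang (rot_of_distTriang _ (rot_of_distTriang _ hq)) hs'.1.1
        (hT.shift_mem_X hs.1.1), y, hy, ⟨(shiftFunctor C 1).mapIso (asIso g).symm⟩⟩
    rcases hs'.2.2 _ _ _ _ _ hs.1 hqH (rot_of_distTriang _ hq) with h0 | h0
    · exact absurd h0 hs.2.1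
    · exact (Triangle.isZero₃_iff_isIso₁ _ (rot_of_distTriang _ hq)).1 h0
  · have : IsIso (i ≫ j) := (Triangle.isZero₃_iff_isIso₁ _ hm).1 hm0
    exact absurd (by rw [← cancel_epi (i ≫ j), assoc, distTriang_mk_comp₁₂ hq, comp_zero,
      comp_zero]) hf

end IsTStructure

section SimpleTilt

open ZeroObject

variable {X Y S : Set C}

/-- The right simple tilt `K = (S^⊥ ∩ H) * ⟨S⟩[-1]` of the heart `H = heart X Y` at `S`. -/
def rightSimpleTilt (S X Y : Set C) : Set C :=
  star (rPerp S ∩ heart X Y) (shiftSet (extClosure S) (-1))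

/-- Contains `p⟦1⟧` for every simple object `p` of the right simple tilt, up to isomorphism. -/
def approxBlocks (S : Set C) : Set C := rPerp (shiftSet S 1) ∩ (rPerp S ∪ S)

lemma subset_rightSimpleTilt_left : rPerp S ∩ heart X Y ⊆ rightSimpleTilt S X Y :=
  subset_star_left ⟨0, zero_mem_extClosure S,
    ⟨((shiftFunctor C (-1)).map_isZero (isZero_zero C)).iso (isZero_zero C)⟩⟩

lemma subset_rightSimpleTilt_right (hT : IsTStructure X Y) :
    shiftSet (extClosure S) (-1) ⊆ rightSimpleTilt S X Y :=
  subset_star_right ⟨fun _ _ f => (isZero_zero C).eq_of_tgt f 0, hT.zero_mem_heart⟩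

lemma IsSimpleIn.of_iso {K : Set C} {p q : C} (hp : IsSimpleIn K p) (e : q ≅ p) (hq : q ∈ K) :
    IsSimpleIn K q :=
  ⟨hq, fun h => hp.2.1 (h.of_iso e.symm),
    fun _ _ _ _ _ ha hb h => hp.2.2 _ _ _ _ _ ha hb (distTriang_mk_iso₂ h e)⟩

/-- A nonzero `φ : s ⟶ f⟦1⟧` would have its cocone `E` in `S^⊥ ∩ H` by Schur's lemma, and then
`s⟦-1⟧ → f → E` would exhibit a proper subobject of the simple object `f` of `K`. -/
lemma shift_mem_rPerp_of_isSimpleIn (hT : IsTStructure X Y) (hS : S ⊆ simplesOf (heart X Y))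
    {f : C} (hf : f ∈ rPerp S ∩ heart X Y) (hsimp : IsSimpleIn (rightSimpleTilt S X Y) f) :
    f⟦(1 : ℤ)⟧ ∈ rPerp S := by
  intro s hs φ
  by_contra hφ
  obtain ⟨E, u, v, hE⟩ := distinguished_cocone_triangle₂ φ
  have hEF : E ∈ rPerp S ∩ heart X Y := by
    refine ⟨fun s' hs' η => ?_, hT.mem_heart_of_distTriang hE hf.2 (hS hs).1⟩
    by_cases hη : η ≫ v = 0
    · obtain ⟨ρ, rfl⟩ := coyoneda_exact₂_mk hE η hη
      rw [hf.1 s' hs' ρ, zero_comp]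
    · have := hT.isIso_of_isSimpleIn_heart (hS hs') (hS hs) hη
      exact absurd (by rw [← cancel_epi (η ≫ v), assoc, distTriang_mk_comp₂₃ hE, comp_zero,
        comp_zero]) hφ
  rcases hsimp.2.2 _ _ _ _ _ (subset_rightSimpleTilt_right hT ⟨s, subset_extClosure S hs,
    ⟨Iso.refl _⟩⟩) (subset_rightSimpleTilt_left hEF) (inv_rot_of_distTriang _ hE) with h0 | h0
  · exact (hS hs).2.1 (isZero_of_isZero_shift (-1) h0)
  · have : IsIso φ := (Triangle.isZero₂_iff_isIso₃ _ hE).1 h0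
    have e : f ≅ s⟦(-1 : ℤ)⟧ :=
      (shiftEquiv C 1).unitIso.app f ≪≫ (shiftFunctor C (-1)).mapIso (asIso φ).symm
    exact hsimp.2.1 (hT.isZero_of_mem_X_of_mem_Y hf.2.1
      (hT.isoY e.symm (hT.shift_neg_mem_Y_of_mem_heart (hS hs).1)))

lemma mem_approxBlocks (hT : IsTStructure X Y) (hS : S ⊆ simplesOf (heart X Y)) {s : C}
    (hs : s ∈ S) : s ∈ approxBlocks S :=
  ⟨rPerp_anti (by rintro _ ⟨s', hs', e⟩; exact ⟨s', (hS hs').1.1, e⟩)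
    (hT.mem_rPerp_of_mem_heart (hS hs).1), Or.inr hs⟩

lemma shift_mem_extClosure_approxBlocks_of_iso (hT : IsTStructure X Y)
    (hS : S ⊆ simplesOf (heart X Y)) {x : C} (hx : x ∈ extClosure S) :
    ∀ {p : C}, IsSimpleIn (rightSimpleTilt S X Y) p → (x⟦(-1 : ℤ)⟧ ≅ p) →
      p⟦(1 : ℤ)⟧ ∈ extClosure (approxBlocks S) := by
  induction hx with
  | of s hs =>
    intro p _ e
    exact ExtClosureP.iso _ _ (((shiftEquiv C 1).counitIso.app s).symm ≪≫
      (shiftFunctor C 1).mapIso e) (subset_extClosure _ (mem_approxBlocks hT hS hs))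
  | zero z hz =>
    intro p _ e
    exact ExtClosureP.zero _ ((shiftFunctor C 1).map_isZero
      (((shiftFunctor C (-1)).map_isZero hz).of_iso e.symm))
  | iso x y e' _ ih => exact fun hp e => ih hp ((shiftFunctor C (-1)).mapIso e' ≪≫ e)
  | ext a x b f g w htri ha hb iha ihb =>
    intro p hp e
    obtain ⟨w', hw'⟩ := shift_distTriang_mk htri (-1)
    have h := distTriang_mk_iso₂ hw' e
    rcases hp.2.2 _ _ _ _ _ (subset_rightSimpleTilt_right hT ⟨a, ha, ⟨Iso.refl _⟩⟩)
      (subset_rightSimpleTilt_right hT ⟨b, hb, ⟨Iso.refl _⟩⟩) h with h0 | h0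
    · have : IsIso (e.inv ≫ g⟦(-1 : ℤ)⟧') := (Triangle.isZero₁_iff_isIso₂ _ h).1 h0
      exact ihb hp (asIso (e.inv ≫ g⟦(-1 : ℤ)⟧')).symm
    · have : IsIso (f⟦(-1 : ℤ)⟧' ≫ e.hom) := (Triangle.isZero₃_iff_isIso₁ _ h).1 h0
      exact iha hp (asIso (f⟦(-1 : ℤ)⟧' ≫ e.hom))

lemma shift_mem_extClosure_approxBlocks (hT : IsTStructure X Y)
    (hS : S ⊆ simplesOf (heart X Y)) {p : C} (hp : IsSimpleIn (rightSimpleTilt S X Y) p) :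
    p⟦(1 : ℤ)⟧ ∈ extClosure (approxBlocks S) := by
  obtain ⟨a, b, i, π, w, ha, hb, h⟩ := hp.1
  rcases hp.2.2 _ _ _ _ _ (subset_rightSimpleTilt_left ha) (subset_rightSimpleTilt_right hT hb)
    h with h0 | h0
  · have : IsIso π := (Triangle.isZero₁_iff_isIso₂ _ h).1 h0
    obtain ⟨x, hx, ⟨e⟩⟩ := hb
    exact shift_mem_extClosure_approxBlocks_of_iso hT hS hx hp (e ≪≫ (asIso π).symm)
  · have : IsIso i := (Triangle.isZero₃_iff_isIso₁ _ h).1 h0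
    have ha' := hp.of_iso (asIso i) (subset_rightSimpleTilt_left ha)
    refine ExtClosureP.iso _ _ ((shiftFunctor C 1).mapIso (asIso i)) (subset_extClosure _ ⟨?_, ?_⟩)
    · exact (mem_rPerp_shiftSet_iff 1).2
        (mem_rPerp_of_iso ((shiftEquiv C 1).unitIso.app a) ha.1)
    · exact Or.inl (shift_mem_rPerp_of_isSimpleIn hT hS ha ha')

lemma shift_neg_mem_rPerp_of_mem_extClosure {D : C} (hD : D ∈ extClosure (approxBlocks S)) :
    D⟦(-1 : ℤ)⟧ ∈ rPerp (extClosure S) := by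
  rw [rPerp_extClosure, ← mem_rPerp_shiftSet_iff]
  exact mem_rPerp_of_mem_extClosure (fun _ hp => hp.1) hD

end SimpleTilt

section TightApproxDef

variable {A : Type*} [Category A] [Preadditive A] [HasShift A ℤ] {T : Set A}

/-- Such an `ε : t ⟶ B` is a right `T`-approximation whose cone lies in `T^⊥`. -/
def IsTightRightApprox (T : Set A) {t B : A} (ε : t ⟶ B) : Prop :=
  IsRightApprox T ε ∧ HomInjective T (ε⟦(1 : ℤ)⟧')

def HasTightRightApprox (T : Set A) (B : A) : Prop :=
  ∃ (t : A) (ε : t ⟶ B), IsTightRightApprox T ε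

lemma HasTightRightApprox.of_mem {B : A} (hB : B ∈ T) : HasTightRightApprox T B :=
  ⟨B, 𝟙 B, ⟨hB, fun _ _ ψ => ⟨ψ, comp_id ψ⟩⟩, fun _ _ ψ hψ => by simpa using hψ⟩

end TightApproxDef

section TightApprox

variable {T U : Set C}

def PropagatesTightApprox (T : Set C) (D : C) : Prop :=
  ∀ ⦃B E : C⦄ (ι : B ⟶ E) (π : E ⟶ D) (w : D ⟶ B⟦(1 : ℤ)⟧),
    Triangle.mk ι π w ∈ distTriang C → HasTightRightApprox T B → HasTightRightApprox T E

/-- The extension of `ε ≫ φ` along `κ` factors through `φ`, which forces `κ ≫ ε⟦1⟧ = 0`. -/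
lemma HasTightRightApprox.of_homSurjective {Y₁ Y₂ : C} {φ : Y₁ ⟶ Y₂}
    (hs : HomSurjective (extClosure U) φ) (hi : HomInjective (extClosure U) φ)
    (h : HasTightRightApprox (extClosure U) Y₁) : HasTightRightApprox (extClosure U) Y₂ := by
  obtain ⟨t, ε, ⟨ht, hsurj⟩, hinj⟩ := h
  refine ⟨t, ε ≫ φ, ⟨ht, fun z hz ψ => ?_⟩, fun z hz κ hκ => hinj hz κ ?_⟩
  · obtain ⟨ψ₁, rfl⟩ := hs hz ψ
    obtain ⟨ζ, rfl⟩ := hsurj hz ψ₁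
    exact ⟨ζ, (assoc _ _ _).symm⟩
  · obtain ⟨E, i, p, hE⟩ := distinguished_cocone_triangle₂ κ
    obtain ⟨Λ, hΛ⟩ := yoneda_exact₁_mk hE (ε ≫ φ) hκ
    obtain ⟨Λ₁, rfl⟩ := hs (ExtClosureP.ext _ _ _ _ _ _ hE ht hz) Λ
    have hiΛ : i ≫ Λ₁ = ε := sub_eq_zero.1 (hi ht _ (by
      rw [Preadditive.sub_comp, assoc, ← hΛ, sub_self]))
    rw [← hiΛ, Functor.map_comp, ← assoc, distTriang_mk_comp₃₁ hE, zero_comp]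

lemma IsTightRightApprox.comp_of_distTriang {t B E D : C} {ε : t ⟶ B}
    (hε : IsTightRightApprox T ε) {ι : B ⟶ E} {π : E ⟶ D} {w : D ⟶ B⟦(1 : ℤ)⟧}
    (h : Triangle.mk ι π w ∈ distTriang C)
    (hw : ∀ ⦃z : C⦄, z ∈ T → ∀ (χ : z ⟶ D) (c : z ⟶ t⟦(1 : ℤ)⟧),
      χ ≫ w = c ≫ ε⟦(1 : ℤ)⟧' → χ = 0) :
    IsTightRightApprox T (ε ≫ ι) := by
  obtain ⟨⟨ht, hsurj⟩, hinj⟩ := hε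
  refine ⟨⟨ht, fun z hz ψ => ?_⟩, fun z hz κ hκ => hinj hz κ ?_⟩
  · obtain ⟨ψB, rfl⟩ := coyoneda_exact₂_mk h ψ
      (hw hz _ 0 (by rw [assoc, distTriang_mk_comp₂₃ h, comp_zero, zero_comp]))
    obtain ⟨ζ, rfl⟩ := hsurj hz ψB
    exact ⟨ζ, (assoc _ _ _).symm⟩
  · rw [Functor.map_comp, ← assoc] at hκ
    obtain ⟨χ, hχ⟩ := coyoneda_exact₁_mk h _ hκ
    rw [hχ, hw hz χ κ hχ.symm, zero_comp]

/-- If the attaching map `w` lifts to `w' : D ⟶ t⟦1⟧`, the cocone of `w'` approximates `E`. -/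
lemma IsTightRightApprox.hasTightRightApprox_of_lift {t B E D : C} {ε : t ⟶ B}
    (hε : IsTightRightApprox (extClosure U) ε) {ι : B ⟶ E} {π : E ⟶ D} {w : D ⟶ B⟦(1 : ℤ)⟧}
    (h : Triangle.mk ι π w ∈ distTriang C) (hD : D ∈ extClosure U) {w' : D ⟶ t⟦(1 : ℤ)⟧}
    (hw' : w' ≫ ε⟦(1 : ℤ)⟧' = w) : HasTightRightApprox (extClosure U) E := by
  obtain ⟨⟨ht, hsurj⟩, hinj⟩ := hε
  obtain ⟨t', u, v, ht'⟩ := distinguished_cocone_triangle₂ w'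
  obtain ⟨ε', hu, hv⟩ := complete_distinguished_triangle_morphism₂_mk ht' h ε (𝟙 D)
    (hw'.trans (id_comp w).symm)
  rw [comp_id] at hv
  refine ⟨t', ε', ⟨ExtClosureP.ext _ _ _ _ _ _ ht' ht hD, fun z hz ψ => ?_⟩, fun z hz κ hκ => ?_⟩
  · obtain ⟨c, hc⟩ := coyoneda_exact₃_mk ht' (ψ ≫ π) (hinj hz _ (by
      rw [assoc, assoc, hw', distTriang_mk_comp₂₃ h, comp_zero]))
    obtain ⟨ψB, hψB⟩ := coyoneda_exact₂_mk h (ψ - c ≫ ε')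
      (by rw [Preadditive.sub_comp, assoc, ← hv, ← hc, sub_self])
    obtain ⟨ζ, rfl⟩ := hsurj hz ψB
    exact ⟨c + ζ ≫ u, by rw [Preadditive.add_comp, assoc, hu, ← assoc, ← hψB, add_sub_cancel]⟩
  · obtain ⟨w'', hsh⟩ := shift_distTriang_mk ht' 1
    obtain ⟨κB, rfl⟩ := coyoneda_exact₂_mk hsh κ
      (by rw [hv, Functor.map_comp, ← assoc, hκ, zero_comp])
    have hκB : (κB ≫ ε⟦(1 : ℤ)⟧') ≫ ι⟦(1 : ℤ)⟧' = 0 := by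
      rw [assoc, ← Functor.map_comp, ← hu, Functor.map_comp, ← assoc, hκ]
    obtain ⟨χ, hχ⟩ := coyoneda_exact₁_mk h _ hκB
    have : κB = χ ≫ w' := sub_eq_zero.1 (hinj hz _ (by
      rw [Preadditive.sub_comp, assoc, hw', hχ, sub_self]))
    rw [this, assoc, distTriang_mk_comp₃₁ ht', comp_zero]

end TightApprox

section Propagation

variable {T U : Set C}

lemma propagatesTightApprox_of_mem_rPerp {D : C} (hD : D ∈ rPerp T) :
    PropagatesTightApprox T D := fun _ _ _ _ _ h ⟨t, _, hε⟩ =>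
  ⟨t, _, hε.comp_of_distTriang h fun _ hz χ _ _ => hD _ hz χ⟩

lemma PropagatesTightApprox.of_iso {D D' : C} (h : PropagatesTightApprox T D) (e : D ≅ D') :
    PropagatesTightApprox T D' := fun _ _ ι π w hτ hB =>
  h ι (π ≫ e.inv) (e.hom ≫ w) (distTriang_mk_iso₃ hτ e.symm) hB

/-- By induction on `⟨S⟩`; in the base case a nonzero `χ` is invertible by Schur's lemma, so `w`
would lift. -/
lemma eq_zero_of_not_exists_lift {X Y S : Set C} (hT : IsTStructure X Y)
    (hS : S ⊆ simplesOf (heart X Y)) {s₀ t B : C} (hs₀ : s₀ ∈ S) {ε : t ⟶ B}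
    (hε : IsTightRightApprox (extClosure S) ε) {w : s₀ ⟶ B⟦(1 : ℤ)⟧}
    (hw : ¬ ∃ w' : s₀ ⟶ t⟦(1 : ℤ)⟧, w' ≫ ε⟦(1 : ℤ)⟧' = w) {z : C} (hz : z ∈ extClosure S) :
    ∀ (χ : z ⟶ s₀) (c : z ⟶ t⟦(1 : ℤ)⟧), χ ≫ w = c ≫ ε⟦(1 : ℤ)⟧' → χ = 0 := by
  induction hz with
  | of s hs =>
    intro χ c hχ
    by_contra hχ0
    have := hT.isIso_of_isSimpleIn_heart (hS hs) (hS hs₀) hχ0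
    exact hw ⟨inv χ ≫ c, by rw [assoc, ← hχ, IsIso.inv_hom_id_assoc]⟩
  | zero z hz => exact fun χ _ _ => hz.eq_of_src χ 0
  | iso x y e _ ih =>
    intro χ c hχ
    simpa using e.inv ≫= ih (e.hom ≫ χ) (e.hom ≫ c) (by rw [assoc, assoc, hχ])
  | ext z₁ z z₂ f g ρ htri h₁ _ ih₁ ih₂ =>
    intro χ c hχ
    obtain ⟨χ₂, rfl⟩ := yoneda_exact₂_mk htri χ (ih₁ (f ≫ χ) (f ≫ c) (by rw [assoc, assoc, hχ]))
    obtain ⟨c₂, rfl⟩ := yoneda_exact₂_mk htri c (hε.2 h₁ _ (by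
      rw [assoc, ← hχ, ← assoc, ← assoc, distTriang_mk_comp₁₂ htri, zero_comp, zero_comp]))
    obtain ⟨m, hm⟩ := yoneda_exact₃_mk htri (χ₂ ≫ w - c₂ ≫ ε⟦(1 : ℤ)⟧')
      (by rw [Preadditive.comp_sub, ← assoc, ← assoc, hχ, assoc, sub_self])
    obtain ⟨m₀, rfl⟩ := (shiftFunctor C (1 : ℤ)).map_surjective m
    obtain ⟨ζ, rfl⟩ := hε.1.2 h₁ m₀
    rw [ih₂ χ₂ (c₂ + ρ ≫ ζ⟦(1 : ℤ)⟧') (by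
      rw [Preadditive.add_comp, assoc, ← Functor.map_comp, ← hm, add_sub_cancel]), comp_zero]

lemma propagatesTightApprox_of_mem {X Y S : Set C} (hT : IsTStructure X Y)
    (hS : S ⊆ simplesOf (heart X Y)) {s₀ : C} (hs₀ : s₀ ∈ S) :
    PropagatesTightApprox (extClosure S) s₀ := by
  rintro B E ι π w h ⟨t, ε, hε⟩
  by_cases hlift : ∃ w' : s₀ ⟶ t⟦(1 : ℤ)⟧, w' ≫ ε⟦(1 : ℤ)⟧' = w
  · obtain ⟨w', hw'⟩ := hlift
    exact hε.hasTightRightApprox_of_lift h (subset_extClosure S hs₀) hw'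
  · exact ⟨t, ε ≫ ι, hε.comp_of_distTriang h fun _ hz =>
      eq_zero_of_not_exists_lift hT hS hs₀ hε hlift hz⟩

section Comparison

variable {B E₁ E D₁ D : C} {ι₁ : B ⟶ E₁} {π₁ : E₁ ⟶ D₁} {ι : B ⟶ E} {π : E ⟶ D}
  {w : D ⟶ B⟦(1 : ℤ)⟧} {α : D₁ ⟶ D} {ν : E₁ ⟶ E}

lemma exists_comp_eq_of_distTriang_hom {D₂ : C} {β : D ⟶ D₂} {ρ : D₂ ⟶ D₁⟦(1 : ℤ)⟧}
    (h₁ : Triangle.mk ι₁ π₁ (α ≫ w) ∈ distTriang C) (h : Triangle.mk ι π w ∈ distTriang C)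
    (hD : Triangle.mk α β ρ ∈ distTriang C) (hν₁ : ι₁ ≫ ν = ι) (hν₂ : π₁ ≫ α = ν ≫ π)
    {W : C} (ψ : W ⟶ E) (hψ : ψ ≫ π ≫ β = 0) : ∃ ψ₁ : W ⟶ E₁, ψ₁ ≫ ν = ψ := by
  obtain ⟨χ, hχ⟩ := coyoneda_exact₂_mk hD (ψ ≫ π) (by rw [assoc]; exact hψ)
  obtain ⟨ψ₁, hψ₁⟩ := coyoneda_exact₃_mk h₁ χ
    (by rw [← assoc, ← hχ, assoc, distTriang_mk_comp₂₃ h, comp_zero])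
  obtain ⟨ψB, hψB⟩ := coyoneda_exact₂_mk h (ψ - ψ₁ ≫ ν)
    (by rw [Preadditive.sub_comp, assoc, ← hν₂, ← assoc, ← hψ₁, ← hχ, sub_self])
  exact ⟨ψ₁ + ψB ≫ ι₁, by rw [Preadditive.add_comp, assoc, hν₁, ← hψB, add_sub_cancel]⟩

lemma homInjective_of_distTriang_hom {T : Set C} (h₁ : Triangle.mk ι₁ π₁ (α ≫ w) ∈ distTriang C)
    (hν₁ : ι₁ ≫ ν = ι) (hν₂ : π₁ ≫ α = ν ≫ π) (hα : HomInjective T α) (hι : HomInjective T ι) :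
    HomInjective T ν := fun _ hz ψ hψ => by
  obtain ⟨ψB, rfl⟩ := coyoneda_exact₂_mk h₁ ψ
    (hα hz _ (by rw [assoc, hν₂, ← assoc, hψ, zero_comp]))
  rw [hι hz ψB (by rw [← hν₁, ← assoc, hψ]), zero_comp]

end Comparison

/-- Given `B → E → D` with `D` an extension of `D₂` by `D₁`, the cocone `E₁` of
`D₁ → D → B⟦1⟧` maps to the cocone `E₂` of `E → D → D₂` by a map that is bijective on
`Hom(⟨U⟩, -)`; this replaces the octahedral axiom. -/
lemma PropagatesTightApprox.of_distTriang {D₁ D D₂ : C} {α : D₁ ⟶ D} {β : D ⟶ D₂}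
    {ρ : D₂ ⟶ D₁⟦(1 : ℤ)⟧} (hD : Triangle.mk α β ρ ∈ distTriang C)
    (h₁ : PropagatesTightApprox (extClosure U) D₁) (h₂ : PropagatesTightApprox (extClosure U) D₂)
    (hD₂ : D₂⟦(-1 : ℤ)⟧ ∈ rPerp (extClosure U)) (hD' : D⟦(-1 : ℤ)⟧ ∈ rPerp (extClosure U)) :
    PropagatesTightApprox (extClosure U) D := by
  intro B E ι π w h hB
  obtain ⟨E₁, ι₁, π₁, hE₁⟩ := distinguished_cocone_triangle₂ (α ≫ w)
  obtain ⟨E₂, ι₂, γ, hE₂⟩ := distinguished_cocone_triangle₁ (π ≫ β)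
  obtain ⟨ν, hν₁, hν₂⟩ := complete_distinguished_triangle_morphism₂_mk hE₁ h (𝟙 B) α (by simp)
  rw [id_comp] at hν₁
  obtain ⟨ν₂, rfl⟩ := coyoneda_exact₂_mk hE₂ ν
    (by rw [← assoc, ← hν₂, assoc, distTriang_mk_comp₁₂ hD, comp_zero])
  have hι₂ := homInjective_of_distTriang hE₂ hD₂
  refine h₂ ι₂ (π ≫ β) γ hE₂ (.of_homSurjective (φ := ν₂) (fun z hz ψ => ?_) ?_ (h₁ ι₁ π₁ _ hE₁ hB))
  · obtain ⟨ψ₁, hψ₁⟩ := exists_comp_eq_of_distTriang_hom hE₁ h hD hν₁ hν₂ (ψ ≫ ι₂)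
      (by rw [assoc, distTriang_mk_comp₁₂ hE₂, comp_zero])
    exact ⟨ψ₁, sub_eq_zero.1 (hι₂ hz _ (by rw [Preadditive.sub_comp, assoc, hψ₁, sub_self]))⟩
  · exact (homInjective_of_distTriang_hom hE₁ hν₁ hν₂ (homInjective_of_distTriang hD hD₂)
      (homInjective_of_distTriang h hD')).of_comp

lemma propagatesTightApprox_of_mem_extClosure {X Y S : Set C} (hT : IsTStructure X Y)
    (hS : S ⊆ simplesOf (heart X Y)) {D : C} (hD : D ∈ extClosure (approxBlocks S)) :
    PropagatesTightApprox (extClosure S) D := by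
  induction hD with
  | of p hp =>
    rcases hp.2 with hp | hp
    · exact propagatesTightApprox_of_mem_rPerp ((rPerp_extClosure S).symm ▸ hp)
    · exact propagatesTightApprox_of_mem hT hS hp
  | zero z hz => exact propagatesTightApprox_of_mem_rPerp fun _ _ f => hz.eq_of_tgt f 0
  | iso x y e _ ih => exact ih.of_iso e
  | ext D₁ D D₂ α β ρ hD h₁ h₂ ih₁ ih₂ =>
    exact .of_distTriang hD ih₁ ih₂ (shift_neg_mem_rPerp_of_mem_extClosure h₂)
      (shift_neg_mem_rPerp_of_mem_extClosure (ExtClosureP.ext _ _ _ _ _ _ hD h₁ h₂))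

end Propagation

/-- if the right simple tilt `K = (S^⊥ ∩ H) * ⟨S⟩[-1]` of a length heart
is again a length heart, then every object of `K[1]` admits a right `⟨S⟩`-approximation. -/
theorem approx_of_length_tilt (k : Type*) [Field k] [Linear k C]
    [∀ x y : C, Module.Finite k (x ⟶ y)] [IsIdempotentComplete C]
    {X Y : Set C} (hXY : IsLengthHeart X Y)
    {S : Set C} (hS : S ⊆ simplesOf (heart X Y))
    (hK : HeartIsLength (star (rPerp S ∩ heart X Y) (shiftSet (extClosure S) (-1)))) :
    ∀ d ∈ shiftSet (star (rPerp S ∩ heart X Y) (shiftSet (extClosure S) (-1))) 1,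
      HasRightApprox (extClosure S) d := by
  rintro d ⟨e, he, ⟨ed⟩⟩
  have hT := hXY.1
  have hd : d ∈ extClosure (approxBlocks S) := ExtClosureP.iso _ _ ed
    (shift_mem_extClosure 1 (fun _ hp => shift_mem_extClosure_approxBlocks hT hS hp) (hK he))
  obtain ⟨t, ε, hε, -⟩ := propagatesTightApprox_of_mem_extClosure hT hS hd _ _ _
    (contractible_distinguished₁ d) (.of_mem (zero_mem_extClosure S))
  exact ⟨t, ε, hε⟩

end SMPaper
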